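/- arXiv:1404.7178 — 3 statements merged into one kernel-verified Lean document; each statement's English description precedes it below -/
import Mathlib

section
/- For the random field Ising model on V_n with Gaussian disorder, let r_{x,y} = E(⟨σ_x σ_y⟩ − ⟨σ_x⟩⟨σ_y⟩), where ⟨·⟩ is the Gibbs expectation and E is expectation over the disorder. Then Σ_{x,y ∈ V_n} r_{x,y}² ≤ (2 + h²)|V_n| / h². -/
open Finset MeasureTheory ProbabilityTheory Real Filter

noncomputable section

/-- The box `V_n = ℤ^d ∩ [1,n]^d`. -/
def box (d n : ℕ) : Finset (Fin d → ℤ) := Fintype.piFinset fun _ => Finset.Icc 1 (n : ℤ)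

/-- Spin configurations on `V_n`, a spin is encoded by a `Bool`. -/
abbrev Config (d n : ℕ) := {x // x ∈ box d n} → Bool

/-- The spin value `±1` of a `Bool`. -/
def spin (b : Bool) : ℝ := if b then 1 else -1

/-- The (negative) Hamiltonian `β ∑_{⟨xy⟩} σ_x σ_y + h ∑_x g_x σ_x`, where
`⟨xy⟩` ranges over nearest-neighbor pairs in the box (each ordered pair counted
with weight 1/2, i.e. each unordered pair once). -/
def energy (d n : ℕ) (β h : ℝ) (g : {x // x ∈ box d n} → ℝ) (σ : Config d n) : ℝ :=
  β * ((1 : ℝ) / 2 * ∑ x : {x // x ∈ box d n}, ∑ y : {x // x ∈ box d n},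
      if (∑ i, |x.1 i - y.1 i|) = 1 then spin (σ x) * spin (σ y) else 0)
  + h * ∑ x, g x * spin (σ x)

/-- The partition function `Z_n(β,h)`. -/
def Z (d n : ℕ) (β h : ℝ) (g : {x // x ∈ box d n} → ℝ) : ℝ :=
  ∑ σ : Config d n, Real.exp (energy d n β h g σ)

/-- Gibbs expectation `⟨f⟩`. -/
def gibbs (d n : ℕ) (β h : ℝ) (g : {x // x ∈ box d n} → ℝ) (f : Config d n → ℝ) : ℝ :=
  (∑ σ : Config d n, f σ * Real.exp (energy d n β h g σ)) / Z d n β h g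

/-- Two-replica Gibbs expectation. -/
def gibbs2 (d n : ℕ) (β h : ℝ) (g : {x // x ∈ box d n} → ℝ)
    (f : Config d n → Config d n → ℝ) : ℝ :=
  (∑ σ1 : Config d n, ∑ σ2 : Config d n,
    f σ1 σ2 * (Real.exp (energy d n β h g σ1) * Real.exp (energy d n β h g σ2)))
    / (Z d n β h g) ^ 2

/-- The overlap `R_{1,2}` of two configurations. -/
def overlap (d n : ℕ) (σ1 σ2 : Config d n) : ℝ :=
  ((box d n).card : ℝ)⁻¹ * ∑ x, spin (σ1 x) * spin (σ2 x)

/-- The disorder: i.i.d. standard Gaussians indexed by the box. -/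
def μdis (d n : ℕ) : Measure ({x // x ∈ box d n} → ℝ) :=
  Measure.pi fun _ => gaussianReal 0 1

/-- Partial derivative in the coordinate `x`. -/
def pd {ι : Type*} [DecidableEq ι] (x : ι) (F : (ι → ℝ) → ℝ) : (ι → ℝ) → ℝ :=
  fun g => deriv (fun t => F (Function.update g x t)) (g x)

end

/-!
Since `∂⟨σ_x⟩/∂g_y = h (⟨σ_x σ_y⟩ - ⟨σ_x⟩⟨σ_y⟩)`, Gaussian integration by parts in the
coordinate `g_y` gives `h r_{x,y} = E(g_y ⟨σ_x⟩)`. The coordinates `(g_y)` are orthonormal in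
`L²` of the disorder, so Bessel's inequality gives `∑_y (h r_{x,y})² ≤ E(⟨σ_x⟩²) ≤ 1`; summing
over `x` bounds `∑_{x,y} r_{x,y}²` by `|V_n| / h²`.
-/

lemma hasDerivAt_gaussianPDFReal_zero_one (x : ℝ) :
    HasDerivAt (gaussianPDFReal 0 1) (-x * gaussianPDFReal 0 1 x) x := by
  have e : gaussianPDFReal 0 1 = fun x => (√(2 * π))⁻¹ * rexp (-x ^ 2 / 2) := by
    ext; simp [gaussianPDFReal]
  have h : HasDerivAt (fun x : ℝ => -x ^ 2 / 2) (-x) x :=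
    ((hasDerivAt_pow 2 x).fun_neg.div_const 2).congr_deriv (by ring)
  rw [e]
  exact ((h.exp).const_mul _).congr_deriv (by ring)

lemma integrable_gaussianPDFReal_mul {f : ℝ → ℝ}
    (hf : Integrable f (gaussianReal 0 1)) : Integrable (fun t => gaussianPDFReal 0 1 t * f t) := by
  rw [gaussianReal_of_var_ne_zero 0 one_ne_zero, integrable_withDensity_iff_integrable_smul'
    (measurable_gaussianPDF 0 1) (ae_of_all _ fun _ => gaussianPDF_lt_top)] at hf
  simpa [toReal_gaussianPDF] using hf

theorem integral_mul_eq_integral_deriv_gaussianReal {φ φ' : ℝ → ℝ}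
    (hφ : ∀ t, HasDerivAt φ (φ' t) t) (hφ_int : Integrable φ (gaussianReal 0 1))
    (hmul_int : Integrable (fun t => t * φ t) (gaussianReal 0 1))
    (hφ'_int : Integrable φ' (gaussianReal 0 1)) :
    ∫ t, t * φ t ∂gaussianReal 0 1 = ∫ t, φ' t ∂gaussianReal 0 1 := by
  set p := gaussianPDFReal 0 1
  have hderiv : ∀ t, HasDerivAt (fun t => φ t * p t) (p t * φ' t - p t * (t * φ t)) t :=
    fun t => ((hφ t).mul (hasDerivAt_gaussianPDFReal_zero_one t)).congr_deriv (by ring)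
  have hp' := integrable_gaussianPDFReal_mul hφ'_int
  have hpmul := integrable_gaussianPDFReal_mul hmul_int
  have hzero := integral_eq_zero_of_hasDerivAt_of_integrable hderiv (hp'.sub hpmul)
    (by simpa only [mul_comm] using integrable_gaussianPDFReal_mul hφ_int)
  rw [integral_sub hp' hpmul, sub_eq_zero] at hzero
  simp only [integral_gaussianReal_eq_integral_smul one_ne_zero, smul_eq_mul]
  exact hzero.symm

theorem integral_mul_eq_integral_deriv_gaussianReal_of_bounded {φ φ' : ℝ → ℝ} {C C' : ℝ}
    (hφ : ∀ t, HasDerivAt φ (φ' t) t) (hφb : ∀ t, |φ t| ≤ C) (hφ'b : ∀ t, |φ' t| ≤ C') :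
    ∫ t, t * φ t ∂gaussianReal 0 1 = ∫ t, φ' t ∂gaussianReal 0 1 := by
  have hφc : Continuous φ := continuous_iff_continuousAt.2 fun t => (hφ t).continuousAt
  have hφ'm : Measurable φ' := funext (fun t => (hφ t).deriv) ▸ measurable_deriv φ
  have hid : Integrable id (gaussianReal 0 1) := (memLp_id_gaussianReal 1).integrable le_rfl
  exact integral_mul_eq_integral_deriv_gaussianReal hφ
    (.of_bound hφc.aestronglyMeasurable C (ae_of_all _ hφb))
    (hid.mul_bdd hφc.aestronglyMeasurable (ae_of_all _ hφb))
    (.of_bound hφ'm.aestronglyMeasurable C' (ae_of_all _ hφ'b))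

lemma integral_mul_self_gaussianReal : ∫ t, t * t ∂gaussianReal 0 1 = 1 := by
  have hid : MemLp id 2 (gaussianReal 0 1) := memLp_id_gaussianReal 2
  have := integral_mul_eq_integral_deriv_gaussianReal (φ := id) (φ' := fun _ => 1)
    hasDerivAt_id (hid.integrable one_le_two)
    (by simpa [sq] using (memLp_two_iff_integrable_sq hid.1).1 hid) (integrable_const 1)
  simpa using this

theorem sum_sq_integral_mul_le_integral_sq {Ω ι : Type*} [MeasurableSpace Ω] [DecidableEq ι]
    {μ : Measure Ω} (s : Finset ι) {e : ι → Ω → ℝ} (he : ∀ i, MemLp (e i) 2 μ)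
    (horth : ∀ i j, ∫ ω, e i ω * e j ω ∂μ = if i = j then 1 else 0)
    {f : Ω → ℝ} (hf : MemLp f 2 μ) :
    ∑ i ∈ s, (∫ ω, e i ω * f ω ∂μ) ^ 2 ≤ ∫ ω, f ω ^ 2 ∂μ := by
  have hinner : ∀ {u v : Ω → ℝ} (hu : MemLp u 2 μ) (hv : MemLp v 2 μ),
      inner ℝ hu.toLp hv.toLp = ∫ ω, u ω * v ω ∂μ := by
    intro u v hu hv
    rw [L2.inner_def]
    refine integral_congr_ae ?_
    filter_upwards [hu.coeFn_toLp, hv.coeFn_toLp] with ω hu hv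
    simp [hu, hv, mul_comm]
  have hon : Orthonormal ℝ fun i => (he i).toLp := by
    rw [orthonormal_iff_ite]
    intro i j
    rw [hinner, horth]
  have := hon.sum_inner_products_le hf.toLp (s := s)
  simp only [hinner, Real.norm_eq_abs, sq_abs] at this
  rw [← real_inner_self_eq_norm_sq, hinner] at this
  simpa [sq] using this

section Resampling

variable {ι : Type*} [Fintype ι] [DecidableEq ι] {α : ι → Type*} [∀ i, MeasurableSpace (α i)]
  (μ : ∀ i, Measure (α i)) [∀ i, IsProbabilityMeasure (μ i)]

theorem measurePreserving_update_prod (y : ι) :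
    MeasurePreserving (fun p : (∀ i, α i) × α y => Function.update p.1 y p.2)
      ((Measure.pi μ).prod (μ y)) (Measure.pi μ) := by
  refine ⟨measurable_update', (Measure.pi_eq fun s hs => ?_).symm⟩
  have hpre : (fun p : (∀ i, α i) × α y => Function.update p.1 y p.2) ⁻¹' Set.univ.pi s
      = Set.univ.pi (Function.update s y Set.univ) ×ˢ s y := by
    ext ⟨g, t⟩
    simp only [Set.mem_preimage, Set.mem_univ_pi, Set.mem_prod]
    rw [Function.forall_update_iff (p := fun i a => a ∈ s i),
      Function.forall_update_iff (p := fun i a => g i ∈ a)]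
    simp [and_comm]
  rw [Measure.map_apply measurable_update' (.univ_pi hs), hpre, Measure.prod_prod, Measure.pi_pi]
  simp_rw [Function.apply_update (fun i (u : Set (α i)) => μ i u)]
  rw [Finset.prod_update_of_mem (Finset.mem_univ y), measure_univ, one_mul,
    ← Finset.prod_erase_mul _ _ (Finset.mem_univ y), Finset.sdiff_singleton_eq_erase]

theorem integral_eq_integral_integral_update {E : Type*} [NormedAddCommGroup E] [NormedSpace ℝ E]
    (y : ι) {f : (∀ i, α i) → E} (hf : Integrable f (Measure.pi μ)) :
    ∫ g, f g ∂Measure.pi μ = ∫ g, ∫ t, f (Function.update g y t) ∂μ y ∂Measure.pi μ := by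
  have hmp := measurePreserving_update_prod μ y
  have hf' : AEStronglyMeasurable f
      (((Measure.pi μ).prod (μ y)).map fun p => Function.update p.1 y p.2) := by
    rw [hmp.map_eq]; exact hf.aestronglyMeasurable
  rw [← hmp.map_eq, integral_map hmp.measurable.aemeasurable hf', hmp.map_eq]
  exact integral_prod _ ((hmp.integrable_comp hf.aestronglyMeasurable).mpr hf)

end Resampling

section GaussianPi

variable {ι : Type*} [Fintype ι]

local notation "γ" => Measure.pi fun _ : ι => gaussianReal 0 1

lemma memLp_eval_gaussianPi (i : ι) : MemLp (fun g : ι → ℝ => g i) 2 γ :=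
  (memLp_id_gaussianReal 2).comp_measurePreserving (measurePreserving_eval _ i)

lemma integral_eval_mul_eval_gaussianPi [DecidableEq ι] (i j : ι) :
    ∫ g, g i * g j ∂γ = if i = j then 1 else 0 := by
  split_ifs with hij
  · subst hij
    rw [integral_comp_eval (f := fun t => t * t) (by fun_prop), integral_mul_self_gaussianReal]
  · have hind := (iIndepFun_pi (μ := fun _ : ι => gaussianReal 0 1) (X := fun _ t => t)
      fun _ => aemeasurable_id').indepFun hij
    rw [hind.integral_fun_mul_eq_mul_integral (measurable_pi_apply i).aestronglyMeasurable
      (measurable_pi_apply j).aestronglyMeasurable]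
    simp [integral_eval, integral_id_gaussianReal]

theorem integral_eval_mul_eq_integral_deriv_gaussianPi [DecidableEq ι] (y : ι)
    {F F' : (ι → ℝ) → ℝ} {C C' : ℝ}
    (hF : ∀ g t, HasDerivAt (fun s => F (Function.update g y s)) (F' (Function.update g y t)) t)
    (hFm : AEStronglyMeasurable F γ) (hF'm : AEStronglyMeasurable F' γ)
    (hFb : ∀ g, |F g| ≤ C) (hF'b : ∀ g, |F' g| ≤ C') :
    ∫ g, g y * F g ∂γ = ∫ g, F' g ∂γ := by
  have hint : Integrable (fun g : ι → ℝ => g y * F g) γ :=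
    ((memLp_eval_gaussianPi y).integrable one_le_two).mul_bdd hFm (ae_of_all _ hFb)
  rw [integral_eq_integral_integral_update _ y hint,
    integral_eq_integral_integral_update _ y (.of_bound hF'm C' (ae_of_all _ hF'b))]
  refine integral_congr_ae (ae_of_all _ fun g => ?_)
  simp only [Function.update_self]
  exact integral_mul_eq_integral_deriv_gaussianReal_of_bounded (hF g) (fun _ => hFb _)
    (fun _ => hF'b _)

end GaussianPi

section Gibbs

variable {d n : ℕ} {β h : ℝ}

lemma abs_spin (b : Bool) : |spin b| = 1 := by
  cases b <;> simp [spin]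

lemma Z_pos (g : {x // x ∈ box d n} → ℝ) : 0 < Z d n β h g :=
  Finset.sum_pos (fun _ _ => exp_pos _) ⟨fun _ => true, Finset.mem_univ _⟩

lemma abs_gibbs_le (g : {x // x ∈ box d n} → ℝ) {f : Config d n → ℝ} {C : ℝ}
    (hf : ∀ σ, |f σ| ≤ C) : |gibbs d n β h g f| ≤ C := by
  have hZ := Z_pos (β := β) (h := h) g
  rw [gibbs, abs_div, abs_of_pos hZ, div_le_iff₀ hZ, Z, Finset.mul_sum]
  refine (Finset.abs_sum_le_sum_abs _ _).trans (Finset.sum_le_sum fun σ _ => ?_)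
  rw [abs_mul, abs_exp]
  exact mul_le_mul_of_nonneg_right (hf σ) (exp_pos _).le

lemma continuous_gibbs (f : Config d n → ℝ) : Continuous fun g => gibbs d n β h g f := by
  have hE : ∀ σ, Continuous fun g => energy d n β h g σ := fun σ => by
    unfold energy; fun_prop
  exact (continuous_finsetSum _ fun σ _ => continuous_const.mul (hE σ).rexp).div
    (continuous_finsetSum _ fun σ _ => (hE σ).rexp) fun g => (Z_pos g).ne'

lemma hasDerivAt_energy_update (g : {x // x ∈ box d n} → ℝ) (y : {x // x ∈ box d n})
    (σ : Config d n) (t : ℝ) :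
    HasDerivAt (fun s => energy d n β h (Function.update g y s) σ) (h * spin (σ y)) t := by
  have hterm : ∀ x, HasDerivAt (fun s => Function.update g y s x * spin (σ x))
      (if x = y then spin (σ y) else 0) t := by
    intro x
    by_cases hxy : x = y
    · subst hxy; simpa using (hasDerivAt_id t).mul_const (spin (σ x))
    · simpa [Function.update_of_ne hxy, hxy] using hasDerivAt_const t (g x * spin (σ x))
  have hsum := HasDerivAt.fun_sum (u := Finset.univ) fun x _ => hterm x
  rw [Finset.sum_ite_eq' _ _ _, if_pos (Finset.mem_univ y)] at hsum
  unfold energy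
  exact (hsum.const_mul h).const_add _

lemma hasDerivAt_gibbs_update (g : {x // x ∈ box d n} → ℝ) (y : {x // x ∈ box d n})
    (f : Config d n → ℝ) (t : ℝ) :
    HasDerivAt (fun s => gibbs d n β h (Function.update g y s) f)
      (h * (gibbs d n β h (Function.update g y t) (fun σ => f σ * spin (σ y))
        - gibbs d n β h (Function.update g y t) f
          * gibbs d n β h (Function.update g y t) (fun σ => spin (σ y)))) t := by
  set g' := Function.update g y t with hg'
  have hw : ∀ σ, HasDerivAt (fun s => exp (energy d n β h (Function.update g y s) σ))
      (exp (energy d n β h g' σ) * (h * spin (σ y))) t :=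
    fun σ => (hasDerivAt_energy_update g y σ t).exp
  have hN := HasDerivAt.fun_sum (u := Finset.univ) fun σ _ => (hw σ).const_mul (f σ)
  have hZ := HasDerivAt.fun_sum (u := Finset.univ) fun σ _ => hw σ
  refine (hN.div hZ (Z_pos g').ne').congr_deriv ?_
  have hN' : ∑ σ, f σ * (exp (energy d n β h g' σ) * (h * spin (σ y)))
      = h * ∑ σ, f σ * spin (σ y) * exp (energy d n β h g' σ) := by
    rw [Finset.mul_sum]; exact Finset.sum_congr rfl fun σ _ => by ring
  have hZ' : ∑ σ, exp (energy d n β h g' σ) * (h * spin (σ y))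
      = h * ∑ σ, spin (σ y) * exp (energy d n β h g' σ) := by
    rw [Finset.mul_sum]; exact Finset.sum_congr rfl fun σ _ => by ring
  have hZ0 := (Z_pos (β := β) (h := h) g').ne'
  rw [hN', hZ']
  simp only [gibbs, Z, ← hg'] at hZ0 ⊢
  field_simp

end Gibbs

section TruncatedCorrelation

variable {d n : ℕ} {β h : ℝ}

instance : IsProbabilityMeasure (μdis d n) := by
  unfold μdis; infer_instance

noncomputable def truncatedCorrelation (d n : ℕ) (β h : ℝ) (g : {x // x ∈ box d n} → ℝ)
    (x y : {x // x ∈ box d n}) : ℝ :=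
  gibbs d n β h g (fun σ => spin (σ x) * spin (σ y))
    - gibbs d n β h g (fun σ => spin (σ x)) * gibbs d n β h g (fun σ => spin (σ y))

lemma continuous_truncatedCorrelation (x y : {x // x ∈ box d n}) :
    Continuous fun g => truncatedCorrelation d n β h g x y :=
  (continuous_gibbs _).sub ((continuous_gibbs _).mul (continuous_gibbs _))

lemma abs_truncatedCorrelation_le (g : {x // x ∈ box d n} → ℝ) (x y : {x // x ∈ box d n}) :
    |truncatedCorrelation d n β h g x y| ≤ 2 := by
  have hxy := abs_gibbs_le (β := β) (h := h) g (f := fun σ => spin (σ x) * spin (σ y))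
    fun σ => by rw [abs_mul, abs_spin, abs_spin, mul_one]
  have hx := abs_gibbs_le (β := β) (h := h) g (f := fun σ => spin (σ x)) fun σ => (abs_spin _).le
  have hy := abs_gibbs_le (β := β) (h := h) g (f := fun σ => spin (σ y)) fun σ => (abs_spin _).le
  calc |truncatedCorrelation d n β h g x y|
      ≤ |gibbs d n β h g (fun σ => spin (σ x) * spin (σ y))|
        + |gibbs d n β h g (fun σ => spin (σ x))| * |gibbs d n β h g (fun σ => spin (σ y))| := by
        rw [← abs_mul]; exact abs_sub _ _
    _ ≤ 1 + 1 * 1 := by gcongr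
    _ = 2 := by norm_num

lemma integral_eval_mul_gibbs_spin (x y : {x // x ∈ box d n}) :
    ∫ g, g y * gibbs d n β h g (fun σ => spin (σ x)) ∂μdis d n
      = h * ∫ g, truncatedCorrelation d n β h g x y ∂μdis d n := by
  rw [← integral_const_mul]
  exact integral_eval_mul_eq_integral_deriv_gaussianPi y
    (F' := fun g => h * truncatedCorrelation d n β h g x y) (C := 1) (C' := |h| * 2)
    (fun g t => hasDerivAt_gibbs_update g y _ t) (continuous_gibbs _).aestronglyMeasurable
    ((continuous_truncatedCorrelation x y).const_mul h).aestronglyMeasurable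
    (fun g => abs_gibbs_le g fun σ => (abs_spin _).le)
    (fun g => by rw [abs_mul]; gcongr; exact abs_truncatedCorrelation_le g x y)

lemma sum_sq_integral_truncatedCorrelation_le (hh : h ≠ 0) (x : {x // x ∈ box d n}) :
    ∑ y, (∫ g, truncatedCorrelation d n β h g x y ∂μdis d n) ^ 2 ≤ 1 / h ^ 2 := by
  set m := fun g => gibbs d n β h g (fun σ => spin (σ x))
  have hm : Continuous m := continuous_gibbs _
  have hmb : ∀ g, |m g| ≤ 1 := fun g => abs_gibbs_le g fun σ => (abs_spin _).le
  have hr : ∀ y, ∫ g, truncatedCorrelation d n β h g x y ∂μdis d n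
      = (∫ g, g y * m g ∂μdis d n) / h := fun y => by
    rw [integral_eval_mul_gibbs_spin, mul_div_cancel_left₀ _ hh]
  have hbessel : ∑ y, (∫ g, g y * m g ∂μdis d n) ^ 2 ≤ ∫ g, m g ^ 2 ∂μdis d n :=
    sum_sq_integral_mul_le_integral_sq _ memLp_eval_gaussianPi integral_eval_mul_eval_gaussianPi
      (.of_bound hm.aestronglyMeasurable 1 (ae_of_all _ hmb))
  have hm2 : ∫ g, m g ^ 2 ∂μdis d n ≤ 1 := by
    have := integral_mono_of_nonneg (ae_of_all _ fun g => sq_nonneg (m g))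
      (integrable_const (1 : ℝ) (μ := μdis d n))
      (ae_of_all _ fun g => (sq_le_one_iff_abs_le_one _).2 (hmb g))
    simpa using this
  simp_rw [hr, div_pow, ← Finset.sum_div]
  gcongr
  exact hbessel.trans hm2

end TruncatedCorrelation

theorem truncated_correlation_bound_general (d n : ℕ) (β h : ℝ) (hh : 0 < h) :
    ∑ x : {x // x ∈ box d n}, ∑ y : {x // x ∈ box d n},
        (∫ g, (gibbs d n β h g (fun σ => spin (σ x) * spin (σ y))
            - gibbs d n β h g (fun σ => spin (σ x))
              * gibbs d n β h g (fun σ => spin (σ y))) ∂(μdis d n)) ^ 2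
      ≤ (2 + h ^ 2) * ((box d n).card : ℝ) / h ^ 2 := by
  calc _ ≤ ∑ _x : {x // x ∈ box d n}, 1 / h ^ 2 :=
        Finset.sum_le_sum fun x _ => sum_sq_integral_truncatedCorrelation_le hh.ne' x
    _ = ((box d n).card : ℝ) / h ^ 2 := by simp [div_eq_mul_inv]
    _ ≤ (2 + h ^ 2) * ((box d n).card : ℝ) / h ^ 2 := by
        gcongr
        nlinarith [sq_nonneg h]

/-- For `r_{x,y} = E(⟨σ_x σ_y⟩ − ⟨σ_x⟩⟨σ_y⟩)`, one has
`∑_{x,y} r_{x,y}² ≤ (2 + h²)|V_n|/h²`. -/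
theorem truncated_correlation_bound (d n : ℕ) (β h : ℝ) (hβ : 0 < β) (hh : 0 < h) :
    ∑ x : {x // x ∈ box d n}, ∑ y : {x // x ∈ box d n},
        (∫ g, (gibbs d n β h g (fun σ => spin (σ x) * spin (σ y))
            - gibbs d n β h g (fun σ => spin (σ x))
              * gibbs d n β h g (fun σ => spin (σ y))) ∂(μdis d n)) ^ 2
      ≤ (2 + h ^ 2) * ((box d n).card : ℝ) / h ^ 2 :=
  truncated_correlation_bound_general d n β h hh
end

section
/- Let (f_n) be a sequence of random convex functions on an open interval I ⊆ ℝ and p a deterministic convex function on I such that E|f_n(h) − p(h)| → 0 for every h ∈ I. If p is differentiable at h₀ ∈ I and f_n'(h₀) exists with f_n'(h₀) ≤ (f_n(h') − f_n(h₀))/(h' − h₀) for h' > h₀ and f_n'(h₀) ≥ (f_n(h') − f_n(h₀))/(h' − h₀) for h' < h₀ (convexity), then E|f_n'(h₀) − p'(h₀)| → 0. -/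
open MeasureTheory Filter

/-- L¹ version of Griffiths' lemma: if random convex functions `f n` converge in
L¹ pointwise on an open interval `I` to a deterministic convex function `p` which
is differentiable at `h₀ ∈ I`, and each `f n ω` is differentiable at `h₀`, then
the derivatives at `h₀` converge in L¹ to `p'(h₀)`. -/
theorem griffiths_L1 {Ω : Type*} [MeasurableSpace Ω] (P : Measure Ω)
    [IsProbabilityMeasure P] (I : Set ℝ) (hIopen : IsOpen I) (hIconv : Convex ℝ I)
    (f : ℕ → Ω → ℝ → ℝ) (p : ℝ → ℝ) (h₀ : ℝ) (hh₀ : h₀ ∈ I)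
    (hfconv : ∀ n ω, ConvexOn ℝ I (f n ω))
    (hpconv : ConvexOn ℝ I p)
    (hpdiff : DifferentiableAt ℝ p h₀)
    (hfdiff : ∀ n ω, DifferentiableAt ℝ (f n ω) h₀)
    (hint : ∀ n, ∀ h ∈ I, Integrable (fun ω => f n ω h) P)
    (hdint : ∀ n, Integrable (fun ω => deriv (f n ω) h₀) P)
    (hL1 : ∀ h ∈ I, Tendsto (fun n => ∫ ω, |f n ω h - p h| ∂P) atTop (nhds 0)) :
    Tendsto (fun n => ∫ ω, |deriv (f n ω) h₀ - deriv p h₀| ∂P) atTop (nhds 0) := by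
  rw [NormedAddCommGroup.tendsto_nhds_zero]
  intro ε hε
  set p' := deriv p h₀ with hp'
  set ε4 := ε / 4 with hε4
  have hε4pos : 0 < ε4 := by positivity
  -- slope of p tends to p' at h₀
  have hslope : Tendsto (slope p h₀) (nhdsWithin h₀ {h₀}ᶜ) (nhds p') :=
    (hasDerivAt_iff_tendsto_slope).mp hpdiff.hasDerivAt
  -- choose b > h₀ in I with slope p h₀ b < p' + ε4
  have hbex : ∃ b, b ∈ I ∧ h₀ < b ∧ slope p h₀ b < p' + ε4 := by
    have h1 : Tendsto (slope p h₀) (nhdsWithin h₀ (Set.Ioi h₀)) (nhds p') :=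
      hslope.mono_left (nhdsWithin_mono _ (fun x hx => ne_of_gt hx))
    have h2 : ∀ᶠ y in nhdsWithin h₀ (Set.Ioi h₀), slope p h₀ y < p' + ε4 :=
      h1.eventually (eventually_lt_nhds (by linarith))
    have h3 : ∀ᶠ y in nhdsWithin h₀ (Set.Ioi h₀), y ∈ I :=
      eventually_nhdsWithin_of_eventually_nhds (hIopen.eventually_mem hh₀)
    have h4 : ∀ᶠ y in nhdsWithin h₀ (Set.Ioi h₀), h₀ < y := self_mem_nhdsWithin
    obtain ⟨b, hb1, hb2, hb3⟩ := (h2.and (h3.and h4)).exists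
    exact ⟨b, hb2, hb3, hb1⟩
  have haex : ∃ a, a ∈ I ∧ a < h₀ ∧ p' - ε4 < slope p a h₀ := by
    have h1 : Tendsto (slope p h₀) (nhdsWithin h₀ (Set.Iio h₀)) (nhds p') :=
      hslope.mono_left (nhdsWithin_mono _ (fun x hx => ne_of_lt hx))
    have h2 : ∀ᶠ y in nhdsWithin h₀ (Set.Iio h₀), p' - ε4 < slope p h₀ y :=
      h1.eventually (eventually_gt_nhds (by linarith))
    have h3 : ∀ᶠ y in nhdsWithin h₀ (Set.Iio h₀), y ∈ I :=
      eventually_nhdsWithin_of_eventually_nhds (hIopen.eventually_mem hh₀)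
    have h4 : ∀ᶠ y in nhdsWithin h₀ (Set.Iio h₀), y < h₀ := self_mem_nhdsWithin
    obtain ⟨a, ha1, ha2, ha3⟩ := (h2.and (h3.and h4)).exists
    exact ⟨a, ha2, ha3, by rwa [slope_comm]⟩
  obtain ⟨b, hbI, hbgt, hbs⟩ := hbex
  obtain ⟨a, haI, halt, has⟩ := haex
  have hbpos : (0:ℝ) < b - h₀ := by linarith
  have hapos : (0:ℝ) < h₀ - a := by linarith
  -- pointwise bound
  have key : ∀ n ω, |deriv (f n ω) h₀ - p'| ≤
      (|f n ω b - p b| + |f n ω h₀ - p h₀|) / (b - h₀)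
      + (|f n ω a - p a| + |f n ω h₀ - p h₀|) / (h₀ - a) + ε4 := by
    intro n ω
    set D := deriv (f n ω) h₀ with hD
    have hDA : D ≤ slope (f n ω) h₀ b :=
      (hfconv n ω).deriv_le_slope hh₀ hbI hbgt (hfdiff n ω)
    have hBD : slope (f n ω) a h₀ ≤ D :=
      (hfconv n ω).slope_le_deriv haI hh₀ halt (hfdiff n ω)
    have hA : |slope (f n ω) h₀ b - slope p h₀ b| ≤
        (|f n ω b - p b| + |f n ω h₀ - p h₀|) / (b - h₀) := by
      rw [slope_def_field, slope_def_field]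
      rw [div_sub_div_same, abs_div, abs_of_pos hbpos]
      gcongr
      calc |f n ω b - f n ω h₀ - (p b - p h₀)|
          = |(f n ω b - p b) - (f n ω h₀ - p h₀)| := by ring_nf
        _ ≤ |f n ω b - p b| + |f n ω h₀ - p h₀| := abs_sub _ _
    have hB : |slope (f n ω) a h₀ - slope p a h₀| ≤
        (|f n ω a - p a| + |f n ω h₀ - p h₀|) / (h₀ - a) := by
      rw [slope_def_field, slope_def_field]
      rw [div_sub_div_same, abs_div, abs_of_pos hapos]
      gcongr
      calc |f n ω h₀ - f n ω a - (p h₀ - p a)|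
          = |(f n ω h₀ - p h₀) - (f n ω a - p a)| := by ring_nf
        _ ≤ |f n ω h₀ - p h₀| + |f n ω a - p a| := abs_sub _ _
        _ = |f n ω a - p a| + |f n ω h₀ - p h₀| := by ring
    have h1 := le_abs_self (slope (f n ω) h₀ b - slope p h₀ b)
    have h2 := neg_abs_le (slope (f n ω) a h₀ - slope p a h₀)
    have hT1 : (0:ℝ) ≤ (|f n ω a - p a| + |f n ω h₀ - p h₀|) / (h₀ - a) := by positivity
    have hT2 : (0:ℝ) ≤ (|f n ω b - p b| + |f n ω h₀ - p h₀|) / (b - h₀) := by positivity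
    rw [abs_le]
    constructor <;> linarith
  -- integrability
  have hLint : ∀ n, Integrable (fun ω => |deriv (f n ω) h₀ - p'|) P :=
    fun n => ((hdint n).sub (integrable_const _)).abs
  have hRint : ∀ n, Integrable (fun ω =>
      (|f n ω b - p b| + |f n ω h₀ - p h₀|) / (b - h₀)
      + (|f n ω a - p a| + |f n ω h₀ - p h₀|) / (h₀ - a) + ε4) P := by
    intro n
    have i1 : Integrable (fun ω => |f n ω b - p b|) P :=
      ((hint n b hbI).sub (integrable_const _)).abs
    have i2 : Integrable (fun ω => |f n ω h₀ - p h₀|) P :=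
      ((hint n h₀ hh₀).sub (integrable_const _)).abs
    have i3 : Integrable (fun ω => |f n ω a - p a|) P :=
      ((hint n a haI).sub (integrable_const _)).abs
    exact (((i1.add i2).div_const _).add ((i3.add i2).div_const _)).add (integrable_const _)
  -- the majorizing sequence
  set g : ℕ → ℝ := fun n =>
    ((∫ ω, |f n ω b - p b| ∂P) + (∫ ω, |f n ω h₀ - p h₀| ∂P)) / (b - h₀)
    + ((∫ ω, |f n ω a - p a| ∂P) + (∫ ω, |f n ω h₀ - p h₀| ∂P)) / (h₀ - a) + ε4 with hg
  have hgmaj : ∀ n, (∫ ω, |deriv (f n ω) h₀ - p'| ∂P) ≤ g n := by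
    intro n
    have := integral_mono (hLint n) (hRint n) (key n)
    refine this.trans_eq ?_
    have i1 : Integrable (fun ω => |f n ω b - p b|) P :=
      ((hint n b hbI).sub (integrable_const _)).abs
    have i2 : Integrable (fun ω => |f n ω h₀ - p h₀|) P :=
      ((hint n h₀ hh₀).sub (integrable_const _)).abs
    have i3 : Integrable (fun ω => |f n ω a - p a|) P :=
      ((hint n a haI).sub (integrable_const _)).abs
    have j1 : Integrable (fun ω => (|f n ω b - p b| + |f n ω h₀ - p h₀|) / (b - h₀)) P :=
      (i1.add i2).div_const _
    have j2 : Integrable (fun ω => (|f n ω a - p a| + |f n ω h₀ - p h₀|) / (h₀ - a)) P :=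
      (i3.add i2).div_const _
    have e1 : ∫ ω, ((|f n ω b - p b| + |f n ω h₀ - p h₀|) / (b - h₀)
          + (|f n ω a - p a| + |f n ω h₀ - p h₀|) / (h₀ - a) + ε4) ∂P
        = (∫ ω, ((|f n ω b - p b| + |f n ω h₀ - p h₀|) / (b - h₀)
          + (|f n ω a - p a| + |f n ω h₀ - p h₀|) / (h₀ - a)) ∂P) + ∫ _ω, ε4 ∂P :=
      integral_add (j1.add j2) (integrable_const _)
    have e2 : ∫ ω, ((|f n ω b - p b| + |f n ω h₀ - p h₀|) / (b - h₀)
          + (|f n ω a - p a| + |f n ω h₀ - p h₀|) / (h₀ - a)) ∂P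
        = (∫ ω, (|f n ω b - p b| + |f n ω h₀ - p h₀|) / (b - h₀) ∂P)
          + ∫ ω, (|f n ω a - p a| + |f n ω h₀ - p h₀|) / (h₀ - a) ∂P :=
      integral_add j1 j2
    have e3 : ∫ ω, (|f n ω b - p b| + |f n ω h₀ - p h₀|) / (b - h₀) ∂P
        = (∫ ω, (|f n ω b - p b| + |f n ω h₀ - p h₀|) ∂P) / (b - h₀) :=
      integral_div _ _
    have e3' : ∫ ω, (|f n ω a - p a| + |f n ω h₀ - p h₀|) / (h₀ - a) ∂P
        = (∫ ω, (|f n ω a - p a| + |f n ω h₀ - p h₀|) ∂P) / (h₀ - a) :=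
      integral_div _ _
    have e4 : ∫ ω, (|f n ω b - p b| + |f n ω h₀ - p h₀|) ∂P
        = (∫ ω, |f n ω b - p b| ∂P) + ∫ ω, |f n ω h₀ - p h₀| ∂P := integral_add i1 i2
    have e5 : ∫ ω, (|f n ω a - p a| + |f n ω h₀ - p h₀|) ∂P
        = (∫ ω, |f n ω a - p a| ∂P) + ∫ ω, |f n ω h₀ - p h₀| ∂P := integral_add i3 i2
    have e6 : ∫ _ω, ε4 ∂P = ε4 := by simp
    rw [hg, e1, e2, e3, e3', e4, e5, e6]
  have hgtend : Tendsto g atTop (nhds ε4) := by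
    have h0 : Tendsto (fun n => ((∫ ω, |f n ω b - p b| ∂P) + (∫ ω, |f n ω h₀ - p h₀| ∂P)) / (b - h₀)
        + ((∫ ω, |f n ω a - p a| ∂P) + (∫ ω, |f n ω h₀ - p h₀| ∂P)) / (h₀ - a) + ε4)
        atTop (nhds ((0 + 0) / (b - h₀) + (0 + 0) / (h₀ - a) + ε4)) := by
      exact ((((hL1 b hbI).add (hL1 h₀ hh₀)).div_const _).add
        (((hL1 a haI).add (hL1 h₀ hh₀)).div_const _)).add tendsto_const_nhds
    simpa using h0
  have hev : ∀ᶠ n in atTop, g n < ε := hgtend.eventually_lt_const (by linarith)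
  filter_upwards [hev] with n hn
  have hnn : 0 ≤ ∫ ω, |deriv (f n ω) h₀ - p'| ∂P :=
    integral_nonneg (fun ω => abs_nonneg _)
  rw [Real.norm_eq_abs, abs_of_nonneg hnn]
  exact lt_of_le_of_lt (hgmaj n) hn
end

section
/- Suppose that, as n → ∞, the following hold: (i) E⟨R_{1,2}R_{1,3}⟩ − (1/2)(E⟨R_{1,2}⟩)² − (1/2)E⟨R_{1,2}²⟩ → 0; (ii) E⟨R_{2,3}R_{1,4}⟩ − (1/3)(E⟨R_{1,2}⟩)² − (2/3)E⟨R_{1,3}R_{1,2}⟩ → 0; (iii) ⟨R_{2,3}R_{1,4}⟩ = ⟨R_{1,2}⟩² pointwise; (iv) E(⟨R_{1,2}²⟩ − ⟨R_{1,2}⟩²) → 0, together with the symmetry E⟨R_{2,3}R_{1,2}⟩ = E⟨R_{2,3}R_{1,3}⟩ = E⟨R_{1,3}R_{1,2}⟩. Then E⟨R_{1,2}²⟩ − (E⟨R_{1,2}⟩)² → 0. -/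
open Filter

/-- Abstract consequence of the Ghirlanda–Guerra identities.  Writing
`a n = E⟨R₁₂²⟩`, `m n = E⟨R₁₂⟩`, `c n = E⟨R₁₂R₁₃⟩`, `e n = E⟨R₂₃R₁₄⟩` and
`q n = E(⟨R₁₂⟩²)`, assume:
(i) `c n − (1/2)(m n)² − (1/2)a n → 0`;
(ii) `e n − (1/3)(m n)² − (2/3)c n → 0` (the two mixed moments having been
identified with `c n` by replica symmetry);
(iii) `e n = q n` (pointwise identity `⟨R₂₃R₁₄⟩ = ⟨R₁₂⟩²` in the disorder);
(iv) `a n − q n → 0` (i.e. `E(⟨R₁₂²⟩ − ⟨R₁₂⟩²) → 0`).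
Then `E⟨R₁₂²⟩ − (E⟨R₁₂⟩)² → 0`. -/
theorem ghirlanda_guerra_consequence (a m c e q : ℕ → ℝ)
    (hbdd_a : ∀ n, |a n| ≤ 1) (hbdd_m : ∀ n, |m n| ≤ 1)
    (hbdd_c : ∀ n, |c n| ≤ 1) (hbdd_e : ∀ n, |e n| ≤ 1) (hbdd_q : ∀ n, |q n| ≤ 1)
    (h1 : Tendsto (fun n => c n - (1 / 2) * (m n) ^ 2 - (1 / 2) * a n) atTop (nhds 0))
    (h2 : Tendsto (fun n => e n - (1 / 3) * (m n) ^ 2 - (2 / 3) * c n) atTop (nhds 0))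
    (h3 : ∀ n, e n = q n)
    (h4 : Tendsto (fun n => a n - q n) atTop (nhds 0)) :
    Tendsto (fun n => a n - (m n) ^ 2) atTop (nhds 0) := by
  have key := ((h4.add h2).add (h1.const_mul (2/3 : ℝ))).const_mul (3/2 : ℝ)
  simp only [mul_zero, add_zero, mul_add] at key
  convert key using 2 with n
  rw [h3 n]
  ring
end
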